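/- Assume Ĥ is invertible and let x_0 ∈ ℝⁿ. If u and v are both open-loop Nash equilibria of the stubborn delay-free game (costs J̃̂_i, initial state y_0 = x_0), then y_u(T) = y_v(T) = Ĥ⁻¹·( exp(TΛ)·x_0 + ∑_{j=1}^n Ψ_j·exp(τΛᵀ)·W_j·x_0 ) and, for every player i, u_i(t) = v_i(t) for almost every t ∈ [0,T]; i.e., the open-loop Nash equilibrium of the stubborn game is unique (up to null sets). -/

import Mathlib

open Matrix MeasureTheory
open scoped Matrix

noncomputable section

/-- The matrix exponential of a real `n × n` matrix. -/
def mexp {n : ℕ} (A : Matrix (Fin n) (Fin n) ℝ) : Matrix (Fin n) (Fin n) ℝ :=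
  NormedSpace.exp A

/-- An admissible control of the delayed game: a bounded measurable function `u : ℝ → ℝ`
with `u s = 0` for `s < 0`. -/
def AdmissibleD (u : ℝ → ℝ) : Prop :=
  Measurable u ∧ (∃ C, ∀ s, |u s| ≤ C) ∧ ∀ s < 0, u s = 0

/-- An admissible control of the delay-free game: a bounded measurable function. -/
def AdmissibleF (u : ℝ → ℝ) : Prop :=
  Measurable u ∧ ∃ C, ∀ s, |u s| ≤ C

/-- Data of the differential games of opinion formation: the system matrix `Λ`
(the continuous-time Hegselmann–Krause matrix `Λ = D⁻¹A − I`), the input delay `τ`,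
the terminal time `tf`, and for each player `i` the input vector `B i`, the control
weight `r i`, the neighborhood size `d i = |𝒩ᵢ|`, the agent-`i` graph Laplacian `L i`
and the stubbornness coefficient `ω i`. -/
structure GameData (n : ℕ) where
  Λ : Matrix (Fin n) (Fin n) ℝ
  τ : ℝ
  tf : ℝ
  B : Fin n → Fin n → ℝ
  r : Fin n → ℝ
  d : Fin n → ℝ
  L : Fin n → Matrix (Fin n) (Fin n) ℝ
  ω : Fin n → ℝ

namespace GameData

variable {n : ℕ} (G : GameData n)

/-- The standing hypotheses: `τ ≥ 0`, `t_f > τ`, `rᵢ > 0`, `dᵢ > 0`, each `Lᵢ` symmetric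
positive semidefinite, and `ωᵢ ∈ [0,1]`. -/
def Valid : Prop :=
  0 ≤ G.τ ∧ G.τ < G.tf ∧ (∀ i, 0 < G.r i) ∧ (∀ i, 0 < G.d i) ∧
    (∀ i, (G.L i).PosSemidef) ∧ ∀ i, G.ω i ∈ Set.Icc (0 : ℝ) 1

/-- `T = t_f − τ`. -/
def T : ℝ := G.tf - G.τ

/-- `B̂ᵢ = exp(−τΛ)·Bᵢ`. -/
def Bhat (i : Fin n) : Fin n → ℝ := (mexp ((-G.τ) • G.Λ)).mulVec (G.B i)

/-- `L̂ᵢ = exp(τΛᵀ)·Lᵢ·exp(τΛ)`. -/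
def Lhat (i : Fin n) : Matrix (Fin n) (Fin n) ℝ :=
  mexp (G.τ • G.Λᵀ) * G.L i * mexp (G.τ • G.Λ)

/-- `Sᵢ = (1/rᵢ)·B̂ᵢ·B̂ᵢᵀ`. -/
def S (i : Fin n) : Matrix (Fin n) (Fin n) ℝ :=
  (1 / G.r i) • vecMulVec (G.Bhat i) (G.Bhat i)

/-- The matrix `∫₀ᵗ exp((t−s)Λ)·Sᵢ·exp((T−s)Λᵀ) ds` (entrywise integral). -/
def Phi (T' : ℝ) (i : Fin n) (t : ℝ) : Matrix (Fin n) (Fin n) ℝ :=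
  Matrix.of fun a b =>
    ∫ s in (0:ℝ)..t, (mexp ((t - s) • G.Λ) * G.S i * mexp ((T' - s) • G.Λᵀ)) a b

/-- `Ψᵢ = ∫₀ᵀ exp((T−s)Λ)·Sᵢ·exp((T−s)Λᵀ) ds` with `T = t_f − τ`. -/
def Psi (i : Fin n) : Matrix (Fin n) (Fin n) ℝ := G.Phi G.T i G.T

/-- `H = I + ∑ⱼ (1/dⱼ)·Ψⱼ·L̂ⱼ`. -/
def H : Matrix (Fin n) (Fin n) ℝ :=
  1 + ∑ j : Fin n, (1 / G.d j) • (G.Psi j * G.Lhat j)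

/-- `Wᵢ`: the matrix whose `(i,i)` entry is `ωᵢ` and all other entries are `0`. -/
def W (i : Fin n) : Matrix (Fin n) (Fin n) ℝ := Matrix.single i i (G.ω i)

/-- `Ŵᵢ = exp(τΛᵀ)·Wᵢ·exp(τΛ)`. -/
def What (i : Fin n) : Matrix (Fin n) (Fin n) ℝ :=
  mexp (G.τ • G.Λᵀ) * G.W i * mexp (G.τ • G.Λ)

/-- `Ĥ = I + ∑ⱼ Ψⱼ·(Ŵⱼ + ((1−ωⱼ)/dⱼ)·L̂ⱼ)`. -/
def Hhat : Matrix (Fin n) (Fin n) ℝ :=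
  1 + ∑ j : Fin n, G.Psi j * (G.What j + ((1 - G.ω j) / G.d j) • G.Lhat j)

/-- The trajectory of the delayed game:
`x_u(t) = exp(tΛ)·x₀ + ∫₀ᵗ exp((t−s)Λ)·(∑ⱼ Bⱼ·uⱼ(s−τ)) ds`. -/
def xtraj (x0 : Fin n → ℝ) (u : Fin n → ℝ → ℝ) (t : ℝ) : Fin n → ℝ :=
  (mexp (t • G.Λ)).mulVec x0 +
    ∫ s in (0:ℝ)..t, (mexp ((t - s) • G.Λ)).mulVec (∑ j : Fin n, u j (s - G.τ) • G.B j)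

/-- The trajectory of the delay-free game:
`y_u(t) = exp(tΛ)·y₀ + ∫₀ᵗ exp((t−s)Λ)·(∑ⱼ B̂ⱼ·uⱼ(s)) ds`. -/
def ytraj (y0 : Fin n → ℝ) (u : Fin n → ℝ → ℝ) (t : ℝ) : Fin n → ℝ :=
  (mexp (t • G.Λ)).mulVec y0 +
    ∫ s in (0:ℝ)..t, (mexp ((t - s) • G.Λ)).mulVec (∑ j : Fin n, u j s • G.Bhat j)

/-- Player `i`'s cost in the delayed game:
`Jᵢ(u) = (1/dᵢ)·x_u(t_f)ᵀ·Lᵢ·x_u(t_f) + ∫₀^{t_f} rᵢ·uᵢ(t−τ)² dt`. -/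
def J (x0 : Fin n → ℝ) (i : Fin n) (u : Fin n → ℝ → ℝ) : ℝ :=
  (1 / G.d i) * (G.xtraj x0 u G.tf ⬝ᵥ (G.L i).mulVec (G.xtraj x0 u G.tf)) +
    ∫ t in (0:ℝ)..G.tf, G.r i * u i (t - G.τ) ^ 2

/-- Player `i`'s cost in the delay-free game:
`Ĵᵢ(u) = (1/dᵢ)·y_u(T)ᵀ·L̂ᵢ·y_u(T) + ∫₀ᵀ rᵢ·uᵢ(t)² dt`. -/
def JF (y0 : Fin n → ℝ) (i : Fin n) (u : Fin n → ℝ → ℝ) : ℝ :=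
  (1 / G.d i) * (G.ytraj y0 u G.T ⬝ᵥ (G.Lhat i).mulVec (G.ytraj y0 u G.T)) +
    ∫ t in (0:ℝ)..G.T, G.r i * u i t ^ 2

/-- Player `i`'s stubborn cost in the delayed game. -/
def Jstub (x0 : Fin n → ℝ) (i : Fin n) (u : Fin n → ℝ → ℝ) : ℝ :=
  (G.xtraj x0 u G.tf - x0) ⬝ᵥ (G.W i).mulVec (G.xtraj x0 u G.tf - x0) +
    ((1 - G.ω i) / G.d i) * (G.xtraj x0 u G.tf ⬝ᵥ (G.L i).mulVec (G.xtraj x0 u G.tf)) +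
    ∫ t in (0:ℝ)..G.tf, G.r i * u i (t - G.τ) ^ 2

/-- Player `i`'s stubborn cost in the delay-free game, with reference opinion `x₀`. -/
def JstubF (x0 y0 : Fin n → ℝ) (i : Fin n) (u : Fin n → ℝ → ℝ) : ℝ :=
  ((mexp (G.τ • G.Λ)).mulVec (G.ytraj y0 u G.T) - x0) ⬝ᵥ
      (G.W i).mulVec ((mexp (G.τ • G.Λ)).mulVec (G.ytraj y0 u G.T) - x0) +
    ((1 - G.ω i) / G.d i) * (G.ytraj y0 u G.T ⬝ᵥ (G.Lhat i).mulVec (G.ytraj y0 u G.T)) +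
    ∫ t in (0:ℝ)..G.T, G.r i * u i t ^ 2

/-- Open-loop Nash equilibrium of the delayed game. -/
def NashD (x0 : Fin n → ℝ) (u : Fin n → ℝ → ℝ) : Prop :=
  (∀ i, AdmissibleD (u i)) ∧
    ∀ i, ∀ v : ℝ → ℝ, AdmissibleD v →
      G.J x0 i u ≤ G.J x0 i (Function.update u i v)

/-- Open-loop Nash equilibrium of the delay-free game. -/
def NashF (y0 : Fin n → ℝ) (u : Fin n → ℝ → ℝ) : Prop :=
  (∀ i, AdmissibleF (u i)) ∧
    ∀ i, ∀ v : ℝ → ℝ, AdmissibleF v →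
      G.JF y0 i u ≤ G.JF y0 i (Function.update u i v)

/-- Open-loop Nash equilibrium of the stubborn delayed game. -/
def NashStubD (x0 : Fin n → ℝ) (u : Fin n → ℝ → ℝ) : Prop :=
  (∀ i, AdmissibleD (u i)) ∧
    ∀ i, ∀ v : ℝ → ℝ, AdmissibleD v →
      G.Jstub x0 i u ≤ G.Jstub x0 i (Function.update u i v)

/-- Open-loop Nash equilibrium of the stubborn delay-free game. -/
def NashStubF (x0 y0 : Fin n → ℝ) (u : Fin n → ℝ → ℝ) : Prop :=
  (∀ i, AdmissibleF (u i)) ∧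
    ∀ i, ∀ v : ℝ → ℝ, AdmissibleF v →
      G.JstubF x0 y0 i u ≤ G.JstubF x0 y0 i (Function.update u i v)

end GameData

/-! If `u` is an equilibrium and player `i` replaces `uᵢ` by `uᵢ + ε h`, his cost is a quadratic
polynomial in `ε` minimal at `ε = 0`, so its linear coefficient
`2 ∫₀ᵀ h(s) (rᵢ uᵢ(s) + B̂ᵢᵀ exp((T-s)Λᵀ) mᵢ) ds` vanishes, where `mᵢ` is half the gradient of
the terminal cost at `y_u(T)`. Taking for `h` the sign of the bracket shows that
`uᵢ = -(1/rᵢ) B̂ᵢᵀ exp((T-s)Λᵀ) mᵢ` almost everywhere. Substituting this feedback into the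
trajectory turns `∫₀ᵀ exp((T-s)Λ) Sᵢ exp((T-s)Λᵀ) ds = Ψᵢ` into the linear equation
`Ĥ y_u(T) = exp(TΛ) x₀ + ∑ⱼ Ψⱼ exp(τΛᵀ) Wⱼ x₀`, which pins down `y_u(T)` and hence the
controls. -/

theorem eq_zero_of_forall_le_add_mul_add_sq_mul {c A Q : ℝ}
    (h : ∀ ε : ℝ, c ≤ c + ε * A + ε ^ 2 * Q) : A = 0 := by
  have hdisc := discrim_le_zero (a := Q) (b := A) (c := 0) fun ε => by linarith [h ε]
  rw [discrim] at hdisc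
  nlinarith [sq_nonneg A]

theorem Matrix.IsSymm.dotProduct_mulVec_add_smul {ι R : Type*} [Fintype ι] [CommRing R]
    {M : Matrix ι ι R} (hM : M.IsSymm) (a b : ι → R) (ε : R) :
    (a + ε • b) ⬝ᵥ M *ᵥ (a + ε • b) =
      a ⬝ᵥ M *ᵥ a + ε * (2 * (b ⬝ᵥ M *ᵥ a)) + ε ^ 2 * (b ⬝ᵥ M *ᵥ b) := by
  have hba : a ⬝ᵥ M *ᵥ b = b ⬝ᵥ M *ᵥ a := by
    conv_lhs => rw [← hM.eq]
    exact dotProduct_transpose_mulVec M a b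
  simp only [mulVec_add, mulVec_smul, dotProduct_add, add_dotProduct, dotProduct_smul,
    smul_dotProduct, smul_eq_mul, hba]
  ring

theorem ae_eq_zero_of_forall_integral_mul_eq_zero {α : Type*} [MeasurableSpace α]
    {μ : Measure α} {g : α → ℝ} (hg : Measurable g) (hgi : Integrable g μ)
    (h : ∀ φ : α → ℝ, Measurable φ → (∀ x, |φ x| ≤ 1) → ∫ x, φ x * g x ∂μ = 0) :
    g =ᵐ[μ] 0 := by
  let φ : α → ℝ := fun x => if 0 ≤ g x then 1 else -1
  have hφg : ∀ x, φ x * g x = |g x| := fun x => by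
    by_cases hx : 0 ≤ g x
    · simp [φ, hx, abs_of_nonneg hx]
    · simp [φ, hx, abs_of_neg (not_le.mp hx)]
  have hφ : Measurable φ :=
    Measurable.ite (measurableSet_le measurable_const hg) measurable_const measurable_const
  have hint : ∫ x, |g x| ∂μ = 0 := by
    simpa only [hφg] using h φ hφ fun x => by by_cases hx : 0 ≤ g x <;> simp [φ, hx]
  filter_upwards [(integral_eq_zero_iff_of_nonneg (fun x => abs_nonneg (g x)) hgi.abs).mp hint]
    with x hx using abs_eq_zero.mp hx

theorem LinearMap.intervalIntegral_comp_comm {E F : Type*} [NormedAddCommGroup E]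
    [NormedSpace ℝ E] [FiniteDimensional ℝ E] [NormedAddCommGroup F] [NormedSpace ℝ F]
    [CompleteSpace F] (L : E →ₗ[ℝ] F) {f : ℝ → E} {a b : ℝ} {μ : Measure ℝ}
    (hf : IntervalIntegrable f μ a b) :
    ∫ x in a..b, L (f x) ∂μ = L (∫ x in a..b, f x ∂μ) :=
  L.toContinuousLinearMap.intervalIntegral_comp_comm hf

theorem Matrix.intervalIntegral_dotProduct {ι : Type*} [Fintype ι] {f : ℝ → ι → ℝ} {a b : ℝ}
    (hf : IntervalIntegrable f volume a b) (v : ι → ℝ) :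
    (∫ x in a..b, f x) ⬝ᵥ v = ∫ x in a..b, f x ⬝ᵥ v :=
  ((dotProductBilin ℝ ℝ (A := ℝ) (m := ι)).flip v).intervalIntegral_comp_comm hf |>.symm

theorem Matrix.of_intervalIntegral_mulVec {m k : Type*} [Fintype m] [Fintype k]
    {F : ℝ → Matrix m k ℝ} (hF : Continuous F) (a b : ℝ) (v : k → ℝ) :
    (Matrix.of fun i j => ∫ s in a..b, F s i j) *ᵥ v = ∫ s in a..b, F s *ᵥ v := by
  funext i
  have hFv : IntervalIntegrable (fun s => F s *ᵥ v) volume a b :=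
    (hF.matrix_mulVec continuous_const).intervalIntegrable a b
  rw [← LinearMap.proj_apply (R := ℝ) i (∫ s in a..b, F s *ᵥ v),
    ← (LinearMap.proj i).intervalIntegral_comp_comm hFv]
  simp only [mulVec, dotProduct, of_apply, LinearMap.proj_apply]
  rw [intervalIntegral.integral_finsetSum (f := fun j s => F s i j * v j) fun j _ =>
    ((hF.matrix_elem i j).mul continuous_const).intervalIntegrable a b]
  simp only [intervalIntegral.integral_mul_const]

theorem continuous_mexp {n : ℕ} : Continuous (mexp : Matrix (Fin n) (Fin n) ℝ → _) := by
  -- any submultiplicative norm induces the topology of `Matrix`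
  let := Matrix.linftyOpNormedRing (n := Fin n) (α := ℝ)
  let := Matrix.linftyOpNormedAlgebra (n := Fin n) (R := ℝ) (α := ℝ)
  let : NormedAlgebra ℚ (Matrix (Fin n) (Fin n) ℝ) := .restrictScalars ℚ ℝ _
  exact NormedSpace.exp_continuous

theorem mexp_transpose {n : ℕ} (A : Matrix (Fin n) (Fin n) ℝ) : mexp Aᵀ = (mexp A)ᵀ :=
  Matrix.exp_transpose A

namespace AdmissibleF

variable {f g : ℝ → ℝ}

theorem add (hf : AdmissibleF f) (hg : AdmissibleF g) : AdmissibleF fun s => f s + g s := by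
  obtain ⟨hfm, C, hC⟩ := hf
  obtain ⟨hgm, D, hD⟩ := hg
  exact ⟨hfm.add hgm, C + D, fun s => (abs_add_le _ _).trans (add_le_add (hC s) (hD s))⟩

theorem mul (hf : AdmissibleF f) (hg : AdmissibleF g) : AdmissibleF fun s => f s * g s := by
  obtain ⟨hfm, C, hC⟩ := hf
  obtain ⟨hgm, D, hD⟩ := hg
  refine ⟨hfm.mul hgm, C * D, fun s => ?_⟩
  rw [abs_mul]
  exact mul_le_mul (hC s) (hD s) (abs_nonneg _) ((abs_nonneg _).trans (hC s))

theorem const_mul (hf : AdmissibleF f) (c : ℝ) : AdmissibleF fun s => c * f s :=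
  AdmissibleF.mul ⟨measurable_const, |c|, fun _ => le_rfl⟩ hf

theorem intervalIntegrable (hf : AdmissibleF f) (a b : ℝ) : IntervalIntegrable f volume a b := by
  obtain ⟨hfm, C, hC⟩ := hf
  rw [intervalIntegrable_iff]
  exact Measure.integrableOn_of_bounded measure_Ioc_lt_top.ne hfm.aestronglyMeasurable
    (ae_of_all _ hC)

end AdmissibleF

theorem integral_mul_add_mul_sq {u h : ℝ → ℝ} (hu : AdmissibleF u) (hh : AdmissibleF h)
    (r ε a b : ℝ) :
    ∫ t in a..b, r * (u t + ε * h t) ^ 2 =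
      (∫ t in a..b, r * u t ^ 2) + ε * (2 * (r * ∫ t in a..b, u t * h t)) +
        ε ^ 2 * (r * ∫ t in a..b, h t ^ 2) := by
  have hsq : ∀ {f : ℝ → ℝ}, AdmissibleF f → IntervalIntegrable (fun t => f t ^ 2) volume a b :=
    fun hf => by simpa only [sq] using (hf.mul hf).intervalIntegrable a b
  have hpt : ∀ t, r * (u t + ε * h t) ^ 2 =
      r * u t ^ 2 + ε * 2 * r * (u t * h t) + ε ^ 2 * r * h t ^ 2 := fun t => by ring
  simp only [hpt]
  rw [intervalIntegral.integral_add (((hsq hu).const_mul r).add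
      (((hu.mul hh).intervalIntegrable a b).const_mul _)) ((hsq hh).const_mul _),
    intervalIntegral.integral_add ((hsq hu).const_mul r)
      (((hu.mul hh).intervalIntegrable a b).const_mul _)]
  simp only [intervalIntegral.integral_const_mul]
  ring

namespace GameData

variable {n : ℕ} (G : GameData n)

def impulseResponse (i : Fin n) (s : ℝ) : Fin n → ℝ := mexp ((G.T - s) • G.Λ) *ᵥ G.Bhat i

/-- Half the gradient of player `i`'s stubborn terminal cost at the state `y`; the costate of
player `i` at time `T`. -/
def costate (x0 : Fin n → ℝ) (i : Fin n) (y : Fin n → ℝ) : Fin n → ℝ :=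
  (mexp (G.τ • G.Λ))ᵀ *ᵥ (G.W i *ᵥ (mexp (G.τ • G.Λ) *ᵥ y - x0)) +
    ((1 - G.ω i) / G.d i) • (G.Lhat i *ᵥ y)

theorem T_nonneg (hG : G.Valid) : 0 ≤ G.T := sub_nonneg.mpr hG.2.1.le

theorem continuous_mexp_T_sub_smul : Continuous fun s => mexp ((G.T - s) • G.Λ) :=
  continuous_mexp.comp ((continuous_const.sub continuous_id).smul continuous_const)

theorem continuous_impulseResponse (i : Fin n) : Continuous (G.impulseResponse i) :=
  G.continuous_mexp_T_sub_smul.matrix_mulVec continuous_const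

theorem isSymm_W (i : Fin n) : (G.W i).IsSymm := by
  simp [Matrix.IsSymm, W, transpose_single]

theorem isSymm_Lhat {i : Fin n} (hL : (G.L i).IsSymm) : (G.Lhat i).IsSymm := by
  simp only [Matrix.IsSymm, Lhat, transpose_mul, hL.eq, mexp_transpose,
    transpose_transpose, ← transpose_smul, Matrix.mul_assoc]

theorem ytraj_T_eq (y0 : Fin n → ℝ) (u : Fin n → ℝ → ℝ) :
    G.ytraj y0 u G.T =
      mexp (G.T • G.Λ) *ᵥ y0 + ∫ s in 0..G.T, ∑ j, u j s • G.impulseResponse j s := by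
  simp only [ytraj, impulseResponse, mulVec_sum, mulVec_smul]

theorem intervalIntegrable_smul_impulseResponse {f : ℝ → ℝ} (hf : AdmissibleF f) (i : Fin n)
    (a b : ℝ) : IntervalIntegrable (fun s => f s • G.impulseResponse i s) volume a b :=
  (hf.intervalIntegrable a b).smul_continuousOn (G.continuous_impulseResponse i).continuousOn

theorem ytraj_T_update_add_mul {y0 : Fin n → ℝ} {u : Fin n → ℝ → ℝ}
    (hu : ∀ j, AdmissibleF (u j)) {i : Fin n} {h : ℝ → ℝ} (hh : AdmissibleF h) (ε : ℝ) :
    G.ytraj y0 (Function.update u i fun s => u i s + ε * h s) G.T =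
      G.ytraj y0 u G.T + ε • ∫ s in 0..G.T, h s • G.impulseResponse i s := by
  have hpt : ∀ s, ∑ j, Function.update u i (fun s => u i s + ε * h s) j s • G.impulseResponse j s
      = ∑ j, u j s • G.impulseResponse j s + ε • (h s • G.impulseResponse i s) := fun s => by
    rw [← Finset.add_sum_erase _ _ (Finset.mem_univ i),
      ← Finset.add_sum_erase _ _ (Finset.mem_univ i), Function.update_self,
      Finset.sum_congr rfl fun j hj => by rw [Function.update_of_ne (Finset.ne_of_mem_erase hj)],
      add_smul, smul_smul]
    abel
  have hsum : IntervalIntegrable (fun s => ∑ j, u j s • G.impulseResponse j s) volume 0 G.T := by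
    simpa only [Finset.sum_fn] using IntervalIntegrable.sum Finset.univ fun j _ =>
      G.intervalIntegrable_smul_impulseResponse (hu j) j 0 G.T
  simp only [ytraj_T_eq, hpt]
  rw [intervalIntegral.integral_add (g := fun s => ε • (h s • G.impulseResponse i s)) hsum
      ((G.intervalIntegrable_smul_impulseResponse hh i 0 G.T).smul ε),
    intervalIntegral.integral_smul, add_assoc]

theorem JstubF_update_add_mul (x0 y0 : Fin n → ℝ) {i : Fin n} (hL : (G.L i).IsSymm)
    {u : Fin n → ℝ → ℝ} (hu : ∀ j, AdmissibleF (u j)) {h : ℝ → ℝ} (hh : AdmissibleF h) :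
    ∃ Q : ℝ, ∀ ε : ℝ, G.JstubF x0 y0 i (Function.update u i fun s => u i s + ε * h s) =
      G.JstubF x0 y0 i u + ε * (2 * ((∫ s in 0..G.T, h s • G.impulseResponse i s) ⬝ᵥ
        G.costate x0 i (G.ytraj y0 u G.T) + G.r i * ∫ s in 0..G.T, u i s * h s)) + ε ^ 2 * Q := by
  simp only [JstubF, G.ytraj_T_update_add_mul hu hh, Function.update_self]
  set y := G.ytraj y0 u G.T
  set z := ∫ s in 0..G.T, h s • G.impulseResponse i s
  set E := mexp (G.τ • G.Λ)
  refine ⟨(E *ᵥ z) ⬝ᵥ G.W i *ᵥ (E *ᵥ z) + (1 - G.ω i) / G.d i * (z ⬝ᵥ G.Lhat i *ᵥ z) +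
    G.r i * ∫ s in 0..G.T, h s ^ 2, fun ε => ?_⟩
  have hshift : E *ᵥ (y + ε • z) - x0 = (E *ᵥ y - x0) + ε • (E *ᵥ z) := by
    rw [mulVec_add, mulVec_smul]
    abel
  have hcostate : z ⬝ᵥ G.costate x0 i y =
      (E *ᵥ z) ⬝ᵥ G.W i *ᵥ (E *ᵥ y - x0) + (1 - G.ω i) / G.d i * (z ⬝ᵥ G.Lhat i *ᵥ y) := by
    rw [costate, dotProduct_add, dotProduct_smul, smul_eq_mul, dotProduct_transpose_mulVec,
      dotProduct_comm]
  rw [hshift, (G.isSymm_W i).dotProduct_mulVec_add_smul,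
    (G.isSymm_Lhat hL).dotProduct_mulVec_add_smul, integral_mul_add_mul_sq (hu i) hh, hcostate]
  ring

theorem Psi_mulVec (j : Fin n) (v : Fin n → ℝ) :
    G.Psi j *ᵥ v = (1 / G.r j) • ∫ s in 0..G.T,
      (G.impulseResponse j s ⬝ᵥ v) • G.impulseResponse j s := by
  have hF : Continuous fun s => mexp ((G.T - s) • G.Λ) * G.S j * mexp ((G.T - s) • G.Λᵀ) := by
    have hE := G.continuous_mexp_T_sub_smul
    simpa only [← transpose_smul, mexp_transpose] using
      (hE.matrix_mul continuous_const).matrix_mul hE.matrix_transpose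
  rw [Psi, Phi, of_intervalIntegral_mulVec hF, ← intervalIntegral.integral_smul]
  refine intervalIntegral.integral_congr fun s _ => ?_
  simp only [S, impulseResponse, ← transpose_smul, mexp_transpose, ← mulVec_mulVec, smul_mulVec,
    vecMulVec_mulVec, dotProduct_transpose_mulVec, mulVec_smul, op_smul_eq_smul, smul_smul]
  rw [dotProduct_comm]

theorem What_add_smul_Lhat_mulVec (x0 y : Fin n → ℝ) (j : Fin n) :
    (G.What j + ((1 - G.ω j) / G.d j) • G.Lhat j) *ᵥ y =
      G.costate x0 j y + mexp (G.τ • G.Λᵀ) *ᵥ (G.W j *ᵥ x0) := by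
  simp only [costate, What, add_mulVec, smul_mulVec, ← mulVec_mulVec, ← transpose_smul,
    mexp_transpose, mulVec_sub]
  abel

variable {G}

theorem NashStubF.integral_mul_eq_zero {x0 y0 : Fin n → ℝ} {u : Fin n → ℝ → ℝ}
    (hu : G.NashStubF x0 y0 u) {i : Fin n} (hL : (G.L i).IsSymm) {h : ℝ → ℝ}
    (hh : AdmissibleF h) :
    ∫ s in 0..G.T, h s * (G.r i * u i s +
      G.impulseResponse i s ⬝ᵥ G.costate x0 i (G.ytraj y0 u G.T)) = 0 := by
  set m := G.costate x0 i (G.ytraj y0 u G.T)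
  obtain ⟨Q, hQ⟩ := G.JstubF_update_add_mul x0 y0 hL hu.1 hh
  have hfirst := eq_zero_of_forall_le_add_mul_add_sq_mul fun ε =>
    (hu.2 i _ ((hu.1 i).add (hh.const_mul ε))).trans_eq (hQ ε)
  have hdot : (∫ s in 0..G.T, h s • G.impulseResponse i s) ⬝ᵥ m =
      ∫ s in 0..G.T, h s * (G.impulseResponse i s ⬝ᵥ m) := by
    simp only [intervalIntegral_dotProduct (G.intervalIntegrable_smul_impulseResponse hh i 0 G.T),
      smul_dotProduct, smul_eq_mul]
  have hcont : Continuous fun s => G.impulseResponse i s ⬝ᵥ m :=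
    (G.continuous_impulseResponse i).dotProduct continuous_const
  have hsplit : ∀ s, h s * (G.r i * u i s + G.impulseResponse i s ⬝ᵥ m) =
      G.r i * (u i s * h s) + h s * (G.impulseResponse i s ⬝ᵥ m) := fun s => by ring
  simp only [hsplit]
  rw [intervalIntegral.integral_add ((((hu.1 i).mul hh).intervalIntegrable 0 G.T).const_mul _)
      ((hh.intervalIntegrable 0 G.T).mul_continuousOn hcont.continuousOn),
    intervalIntegral.integral_const_mul, ← hdot]
  linarith

theorem NashStubF.ae_eq_feedback {x0 y0 : Fin n → ℝ} {u : Fin n → ℝ → ℝ}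
    (hu : G.NashStubF x0 y0 u) (hG : G.Valid) (i : Fin n) :
    ∀ᵐ t ∂volume.restrict (Set.Icc 0 G.T),
      u i t = -(1 / G.r i) * (G.impulseResponse i t ⬝ᵥ G.costate x0 i (G.ytraj y0 u G.T)) := by
  set m := G.costate x0 i (G.ytraj y0 u G.T)
  have hL : (G.L i).IsSymm := isHermitian_iff_isSymm.mp (hG.2.2.2.2.1 i).isHermitian
  have hcont : Continuous fun t => G.impulseResponse i t ⬝ᵥ m :=
    (G.continuous_impulseResponse i).dotProduct continuous_const
  have hg : IntervalIntegrable (fun t => G.r i * u i t + G.impulseResponse i t ⬝ᵥ m)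
      volume 0 G.T :=
    (((hu.1 i).const_mul _).intervalIntegrable 0 G.T).add (hcont.intervalIntegrable 0 G.T)
  have hzero := ae_eq_zero_of_forall_integral_mul_eq_zero
    (g := fun t => G.r i * u i t + G.impulseResponse i t ⬝ᵥ m)
    ((measurable_const.mul (hu.1 i).1).add hcont.measurable)
    ((intervalIntegrable_iff_integrableOn_Icc_of_le (G.T_nonneg hG)).mp hg)
    fun φ hφ hφ1 => by
      rw [integral_Icc_eq_integral_Ioc, ← intervalIntegral.integral_of_le (G.T_nonneg hG)]
      exact hu.integral_mul_eq_zero hL ⟨hφ, 1, hφ1⟩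
  filter_upwards [hzero] with t ht
  have hr : G.r i ≠ 0 := (hG.2.2.1 i).ne'
  field_simp
  linarith [show G.r i * u i t + G.impulseResponse i t ⬝ᵥ m = 0 from ht]

theorem NashStubF.ytraj_T_eq_sub {x0 y0 : Fin n → ℝ} {u : Fin n → ℝ → ℝ}
    (hu : G.NashStubF x0 y0 u) (hG : G.Valid) :
    G.ytraj y0 u G.T =
      mexp (G.T • G.Λ) *ᵥ y0 - ∑ j, G.Psi j *ᵥ G.costate x0 j (G.ytraj y0 u G.T) := by
  have hcontrol : ∀ j, ∫ s in 0..G.T, u j s • G.impulseResponse j s =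
      -(G.Psi j *ᵥ G.costate x0 j (G.ytraj y0 u G.T)) := by
    intro j
    rw [G.Psi_mulVec, ← neg_smul, ← intervalIntegral.integral_smul]
    refine intervalIntegral.integral_congr_ae ?_
    filter_upwards [(ae_restrict_iff' measurableSet_Icc).mp (hu.ae_eq_feedback hG j)]
      with s hs hmem
    rw [hs (Set.uIcc_of_le (G.T_nonneg hG) ▸ Set.uIoc_subset_uIcc hmem), smul_smul]
  conv_lhs => rw [ytraj_T_eq, intervalIntegral.integral_finsetSum fun j _ =>
    G.intervalIntegrable_smul_impulseResponse (hu.1 j) j 0 G.T]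
  simp only [hcontrol, Finset.sum_neg_distrib, sub_eq_add_neg]

theorem NashStubF.Hhat_mulVec_ytraj {x0 : Fin n → ℝ} {u : Fin n → ℝ → ℝ}
    (hu : G.NashStubF x0 x0 u) (hG : G.Valid) :
    G.Hhat *ᵥ G.ytraj x0 u G.T =
      mexp (G.T • G.Λ) *ᵥ x0 + ∑ j, G.Psi j *ᵥ (mexp (G.τ • G.Λᵀ) *ᵥ (G.W j *ᵥ x0)) := by
  simp only [Hhat, add_mulVec, one_mulVec, sum_mulVec, ← mulVec_mulVec,
    G.What_add_smul_Lhat_mulVec x0, mulVec_add, Finset.sum_add_distrib]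
  rw [← add_assoc, eq_sub_iff_add_eq.mp (hu.ytraj_T_eq_sub hG)]

end GameData

/-- Uniqueness of the open-loop Nash equilibrium of the stubborn delay-free game when `Ĥ`
is invertible: any two equilibria `u, v` from `y₀ = x₀` satisfy
`y_u(T) = y_v(T) = Ĥ⁻¹·(exp(TΛ)·x₀ + ∑ⱼ Ψⱼ·exp(τΛᵀ)·Wⱼ·x₀)` and `uᵢ = vᵢ` almost
everywhere on `[0,T]`. -/
theorem statement_17 {n : ℕ} (G : GameData n) (hG : G.Valid) (hH : IsUnit G.Hhat)
    (x0 : Fin n → ℝ) (u v : Fin n → ℝ → ℝ)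
    (hu : G.NashStubF x0 x0 u) (hv : G.NashStubF x0 x0 v) :
    G.ytraj x0 u G.T = G.Hhat⁻¹.mulVec
        ((mexp (G.T • G.Λ)).mulVec x0 +
          ∑ j : Fin n, (G.Psi j).mulVec ((mexp (G.τ • G.Λᵀ)).mulVec ((G.W j).mulVec x0))) ∧
      G.ytraj x0 v G.T = G.Hhat⁻¹.mulVec
        ((mexp (G.T • G.Λ)).mulVec x0 +
          ∑ j : Fin n, (G.Psi j).mulVec ((mexp (G.τ • G.Λᵀ)).mulVec ((G.W j).mulVec x0))) ∧
      ∀ i, ∀ᵐ t ∂(volume.restrict (Set.Icc (0:ℝ) G.T)), u i t = v i t := by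
  have : Invertible G.Hhat := hH.invertible
  have hyu := inv_mulVec_eq_vec (hu.Hhat_mulVec_ytraj hG).symm
  have hyv := inv_mulVec_eq_vec (hv.Hhat_mulVec_ytraj hG).symm
  refine ⟨hyu.symm, hyv.symm, fun i => ?_⟩
  filter_upwards [hu.ae_eq_feedback hG i, hv.ae_eq_feedback hG i] with t hut hvt
  rw [hut, hvt, ← hyu, ← hyv]
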